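/- arXiv:1001.4213 — 4 statements merged into one kernel-verified Lean document; each statement's English description precedes it below -/
import Mathlib

section
/- S ⊆ X(D) is an arc-reaching set of a digraph D if and only if S ∩ X(D⁻) is a point-reaching set of D⁻, where D⁻ is the induced subdigraph on the non-sink vertices; equivalently, arc-reaching sets of D are exactly the point-reaching sets of D⁻ together with arbitrary subsets of the sinks of D. -/
/-- Reachability by a directed walk (allowing the trivial walk). -/
def Reach {V : Type*} (A : V → V → Prop) : V → V → Prop := Relation.ReflTransGen A
/-- A set S is arc-reaching if for every arc (u,v), u is reachable from some vertex of S. -/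
def ArcReaching {V : Type*} (A : V → V → Prop) (S : Set V) : Prop :=
  ∀ u v : V, A u v → ∃ s ∈ S, Reach A s u

/-- A sink: a vertex of out-degree 0. -/
def Sink {V : Type*} (A : V → V → Prop) (a : V) : Prop := ∀ x : V, ¬ A a x

/-- Arc relation of D⁻, the induced subdigraph on the non-sink vertices. -/
def ArcMinus {V : Type*} (A : V → V → Prop) (x y : V) : Prop :=
  ¬ Sink A x ∧ ¬ Sink A y ∧ A x y

/-- S' is point-reaching in D⁻: every non-sink vertex is reachable in D⁻
from some vertex of S'. -/
def PointReachingMinus {V : Type*} (A : V → V → Prop) (S' : Set V) : Prop :=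
  ∀ v : V, ¬ Sink A v → ∃ s ∈ S', Relation.ReflTransGen (ArcMinus A) s v

/-! A walk in `D` that ends at a non-sink never passes through a sink, since a sink has no
out-arc to continue along. So walks of `D` ending at a tail `u` are exactly walks of `D⁻`
ending at `u`, and arc-reaching (i.e. reaching every tail) in `D` is point-reaching in `D⁻`;
vertices of `S` that are sinks reach nothing but themselves and may be added or dropped freely. -/

section

variable {V : Type*} {A : V → V → Prop}

theorem not_sink_of_adj {a b : V} (h : A a b) : ¬ Sink A a := fun ha => ha b h

theorem not_sink_iff_exists_adj {a : V} : ¬ Sink A a ↔ ∃ b, A a b := by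
  simp only [Sink, not_forall, not_not]

theorem not_sink_of_reflTransGen_arcMinus {s u : V} (h : Relation.ReflTransGen (ArcMinus A) s u)
    (hu : ¬ Sink A u) : ¬ Sink A s := by
  rcases h.cases_head with rfl | ⟨_, hs, _⟩
  · exact hu
  · exact hs.1

theorem reach_of_reflTransGen_arcMinus {s u : V} (h : Relation.ReflTransGen (ArcMinus A) s u) :
    Reach A s u :=
  Relation.ReflTransGen.mono (fun _ _ hxy => hxy.2.2) _ _ h

theorem reflTransGen_arcMinus_of_reach {s u : V} (h : Reach A s u) (hu : ¬ Sink A u) :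
    Relation.ReflTransGen (ArcMinus A) s u := by
  induction h using Relation.ReflTransGen.head_induction_on with
  | refl => exact .refl
  | head hab _ ih =>
    exact .head ⟨not_sink_of_adj hab, not_sink_of_reflTransGen_arcMinus ih hu, hab⟩ ih

theorem arcReaching_iff_forall_not_sink {S : Set V} :
    ArcReaching A S ↔ ∀ u, ¬ Sink A u → ∃ s ∈ S, Reach A s u := by
  simp only [ArcReaching, not_sink_iff_exists_adj, forall_exists_index]

theorem PointReachingMinus.mono {S T : Set V} (h : PointReachingMinus A S) (hST : S ⊆ T) :
    PointReachingMinus A T := fun v hv =>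
  let ⟨s, hs, hsv⟩ := h v hv
  ⟨s, hST hs, hsv⟩

theorem arcReaching_iff_pointReachingMinus_inter {S : Set V} :
    ArcReaching A S ↔ PointReachingMinus A (S ∩ {a | ¬ Sink A a}) := by
  rw [arcReaching_iff_forall_not_sink]
  refine forall₂_congr fun u hu => ⟨?_, ?_⟩
  · rintro ⟨s, hs, hsu⟩
    have hsu' := reflTransGen_arcMinus_of_reach hsu hu
    exact ⟨s, ⟨hs, not_sink_of_reflTransGen_arcMinus hsu' hu⟩, hsu'⟩
  · rintro ⟨s, ⟨hs, -⟩, hsu⟩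
    exact ⟨s, hs, reach_of_reflTransGen_arcMinus hsu⟩

end

theorem arcReaching_iff_pointReaching_minus {V : Type*} (A : V → V → Prop) (S : Set V) :
    (ArcReaching A S ↔ PointReachingMinus A (S ∩ {a | ¬ Sink A a})) ∧
    (ArcReaching A S ↔ ∃ S₀ J : Set V, PointReachingMinus A S₀ ∧
      (∀ a ∈ S₀, ¬ Sink A a) ∧ J ⊆ {a | Sink A a} ∧ S = S₀ ∪ J) := by
  refine ⟨arcReaching_iff_pointReachingMinus_inter, ?_⟩
  rw [arcReaching_iff_pointReachingMinus_inter]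
  constructor
  · intro h
    refine ⟨S ∩ {a | ¬ Sink A a}, S ∩ {a | Sink A a}, h, fun _ ha => ha.2, fun _ ha => ha.2, ?_⟩
    rw [Set.union_comm, ← Set.compl_ofPred, Set.inter_union_compl]
  · rintro ⟨S₀, J, hS₀, hS₀_tails, -, rfl⟩
    exact hS₀.mono fun a ha => ⟨Or.inl ha, hS₀_tails a ha⟩
end

section
/- For any strong component C of a digraph D, either there is an initial strong component C₀ from which C is reachable in the condensation D*, or there is an in-ray in D* ending at C (i.e., an infinite sequence ..., C₂, C₁, C of distinct vertices of D* with an arc from C_{i+1} to C_i and from C₁ to C). -/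
/-- The strong component of a vertex: all vertices mutually reachable with it. -/
def SCC {V : Type*} (A : V → V → Prop) (v : V) : Set V :=
  {w | Reach A v w ∧ Reach A w v}

/-- A set is a strong component iff it is the strong component of some vertex. -/
def IsSCC {V : Type*} (A : V → V → Prop) (C : Set V) : Prop := ∃ v, C = SCC A v

/-- A strong component is initial if no arc enters it from outside. -/
def InitialSCC {V : Type*} (A : V → V → Prop) (C : Set V) : Prop :=
  IsSCC A C ∧ ∀ x y, A x y → y ∈ C → x ∈ C
/-- Arc relation of the condensation D*: between two distinct strong components,
when some arc of D goes from the first to the second. -/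
def CondArc {V : Type*} (A : V → V → Prop) (C₁ C₂ : Set V) : Prop :=
  IsSCC A C₁ ∧ IsSCC A C₂ ∧ C₁ ≠ C₂ ∧ ∃ x ∈ C₁, ∃ y ∈ C₂, A x y

/-! If `C` is accessible for the arc relation of the condensation, well-founded induction walks
backwards along arcs entering the current component until no arc enters it, i.e. until an initial
component is reached. Otherwise `C` starts an infinite descending chain, and its terms are distinct
because the condensation is acyclic: an arc `C₁ → C₂` lets every vertex of `C₁` reach every vertex
of `C₂` but not conversely, and this strict relation is transitive along paths. -/

theorem injective_of_descending_chain {α : Type*} {r : α → α → Prop}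
    (hr : ∀ a, ¬ Relation.TransGen r a a) {f : ℕ → α} (hf : ∀ n, r (f (n + 1)) (f n)) :
    Function.Injective f :=
  haveI : IsStrictOrder α (Relation.TransGen r) := { irrefl := hr }
  (RelEmbedding.natGT (r := Relation.TransGen r) f fun n => .single (hf n)).injective

section

variable {V : Type*} {A : V → V → Prop}

theorem mem_scc_self (A : V → V → Prop) (v : V) : v ∈ SCC A v :=
  ⟨.refl, .refl⟩

theorem scc_eq_of_mem {v w : V} (h : w ∈ SCC A v) : SCC A w = SCC A v := by
  obtain ⟨hvw, hwv⟩ := h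
  ext x
  exact ⟨fun ⟨hwx, hxw⟩ => ⟨hvw.trans hwx, hxw.trans hwv⟩,
    fun ⟨hvx, hxv⟩ => ⟨hwv.trans hvx, hxv.trans hvw⟩⟩

theorem IsSCC.eq_scc_of_mem {C : Set V} (hC : IsSCC A C) {v : V} (hv : v ∈ C) :
    C = SCC A v := by
  obtain ⟨w, rfl⟩ := hC
  exact (scc_eq_of_mem hv).symm

theorem CondArc.reach {C₁ C₂ : Set V} (h : CondArc A C₁ C₂) {a b : V} (ha : a ∈ C₁)
    (hb : b ∈ C₂) : Reach A a b := by
  obtain ⟨⟨v₁, rfl⟩, ⟨v₂, rfl⟩, -, x, hx, y, hy, hxy⟩ := h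
  exact ha.2.trans hx.1 |>.tail hxy |>.trans (hy.2.trans hb.1)

theorem CondArc.not_reach {C₁ C₂ : Set V} (h : CondArc A C₁ C₂) {a b : V} (ha : a ∈ C₁)
    (hb : b ∈ C₂) : ¬ Reach A b a := fun hba =>
  h.2.2.1 <| by
    rw [h.1.eq_scc_of_mem ha, h.2.1.eq_scc_of_mem hb,
      scc_eq_of_mem (⟨h.reach ha hb, hba⟩ : b ∈ SCC A a)]

theorem reach_and_not_reach_of_transGen_condArc {C₁ C₂ : Set V}
    (h : Relation.TransGen (CondArc A) C₁ C₂) {a b : V} (ha : a ∈ C₁) (hb : b ∈ C₂) :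
    Reach A a b ∧ ¬ Reach A b a := by
  induction h generalizing b with
  | single harc => exact ⟨harc.reach ha hb, harc.not_reach ha hb⟩
  | tail _ harc ih =>
    obtain ⟨c, hc, -⟩ := harc.2.2.2
    obtain ⟨hac, -⟩ := ih hc
    exact ⟨hac.trans (harc.reach hc hb), fun hba => harc.not_reach hc hb (hba.trans hac)⟩

theorem condArc_transGen_irrefl (C : Set V) : ¬ Relation.TransGen (CondArc A) C C := by
  intro h
  obtain ⟨_, ⟨-, -, -, a, ha, -⟩, -⟩ := Relation.TransGen.head'_iff.mp h
  exact (reach_and_not_reach_of_transGen_condArc h ha ha).2 .refl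

theorem condArc_scc_of_arc {C : Set V} (hC : IsSCC A C) {x y : V} (hxy : A x y) (hy : y ∈ C)
    (hx : x ∉ C) : CondArc A (SCC A x) C :=
  ⟨⟨x, rfl⟩, hC, fun h => hx (h ▸ mem_scc_self A x), x, mem_scc_self A x, y, hy, hxy⟩

theorem exists_initialSCC_of_acc {C : Set V} (hacc : Acc (CondArc A) C) (hC : IsSCC A C) :
    ∃ C₀, InitialSCC A C₀ ∧ Relation.ReflTransGen (CondArc A) C₀ C := by
  induction hacc with
  | intro C _ ih =>
    by_cases hinit : ∀ x y, A x y → y ∈ C → x ∈ C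
    · exact ⟨C, ⟨hC, hinit⟩, .refl⟩
    push Not at hinit
    obtain ⟨x, y, hxy, hy, hx⟩ := hinit
    have harc := condArc_scc_of_arc hC hxy hy hx
    obtain ⟨C₀, hC₀, hpath⟩ := ih _ harc ⟨x, rfl⟩
    exact ⟨C₀, hC₀, hpath.tail harc⟩

end

theorem initial_reaches_or_inray {V : Type*} (A : V → V → Prop)
    (C : Set V) (hC : IsSCC A C) :
    (∃ C₀ : Set V, InitialSCC A C₀ ∧ Relation.ReflTransGen (CondArc A) C₀ C) ∨
    (∃ f : ℕ → Set V, f 0 = C ∧ Function.Injective f ∧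
      (∀ i, IsSCC A (f i)) ∧ ∀ i, CondArc A (f (i + 1)) (f i)) := by
  by_cases hacc : Acc (CondArc A) C
  · exact .inl (exists_initialSCC_of_acc hacc hC)
  obtain ⟨f, hf₀, hf⟩ := not_acc_iff_exists_descending_chain.1 hacc
  exact .inr ⟨f, hf₀, injective_of_descending_chain condArc_transGen_irrefl hf,
    fun i => (hf i).2.1, hf⟩
end

section
/- A set A is a point-reaching set of a digraph D if and only if A contains at least one vertex from every initial strong component of D, and at least one vertex from every shadow R'(u) that contains no initial strong component. -/
/-- A set S is point-reaching if every vertex is reachable from some vertex of S. -/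
def PointReaching {V : Type*} (A : V → V → Prop) (S : Set V) : Prop :=
  ∀ v : V, ∃ s ∈ S, Reach A s v
/-- The shadow of u: all vertices from which u is reachable. -/
def Shadow {V : Type*} (A : V → V → Prop) (u : V) : Set V := {z | Reach A z u}

/-! An initial strong component is closed under reaching backwards, so a vertex of `S` that
reaches into it lies in it. Conversely, a vertex `v` is reached from `S` either through an
initial component contained in `R'(v)` or, when there is none, directly by the second condition. -/

theorem mem_SCC_self {V : Type*} (A : V → V → Prop) (v : V) : v ∈ SCC A v :=
  ⟨.refl, .refl⟩

theorem InitialSCC.nonempty {V : Type*} {A : V → V → Prop} {C : Set V} (hC : InitialSCC A C) :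
    C.Nonempty := by
  obtain ⟨⟨v, rfl⟩, -⟩ := hC
  exact ⟨v, mem_SCC_self A v⟩

theorem InitialSCC.mem_of_reach {V : Type*} {A : V → V → Prop} {C : Set V}
    (hC : InitialSCC A C) {x y : V} (hxy : Reach A x y) (hy : y ∈ C) : x ∈ C := by
  induction hxy using Relation.ReflTransGen.head_induction_on with
  | refl => exact hy
  | head hxz _ ih => exact hC.2 _ _ hxz ih

theorem PointReaching.exists_mem_of_initialSCC {V : Type*} {A : V → V → Prop} {S C : Set V}
    (hS : PointReaching A S) (hC : InitialSCC A C) : ∃ a ∈ S, a ∈ C := by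
  obtain ⟨v, hv⟩ := hC.nonempty
  obtain ⟨a, haS, hav⟩ := hS v
  exact ⟨a, haS, hC.mem_of_reach hav hv⟩

theorem pointReaching_characterization {V : Type*} (A : V → V → Prop) (S : Set V) :
    PointReaching A S ↔
      ((∀ C : Set V, InitialSCC A C → ∃ a ∈ S, a ∈ C) ∧
       (∀ u : V, ¬ (∃ C : Set V, InitialSCC A C ∧ C ⊆ Shadow A u) →
         ∃ a ∈ S, a ∈ Shadow A u)) := by
  refine ⟨fun hS => ⟨fun C hC => hS.exists_mem_of_initialSCC hC, fun u _ => hS u⟩, ?_⟩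
  rintro ⟨hInitial, hShadow⟩ v
  by_cases h : ∃ C : Set V, InitialSCC A C ∧ C ⊆ Shadow A v
  · obtain ⟨C, hC, hCv⟩ := h
    obtain ⟨a, haS, haC⟩ := hInitial C hC
    exact ⟨a, haS, hCv haC⟩
  · exact hShadow v h
end

section
/- If A is a point-reaching set of a digraph D and u is a vertex whose shadow R'(u) contains no initial strong component, then A ∩ R'(u) is infinite. -/
/-! Reachability preorders the vertices. A finite nonempty set has a minimal element for the strict
part of any preorder, but no `t ∈ S ∩ R'(u)` is minimal: the strong component of `t` lies in `R'(u)`,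
so it is not initial, an arc entering it starts at some `x` strictly below `t`, and the vertex of `S`
reaching `x` lies in `S ∩ R'(u)` strictly below `t`. -/

theorem Set.infinite_of_forall_exists_rel {α : Type*} {r : α → α → Prop} [IsStrictOrder α r]
    {s : Set α} (hs : s.Nonempty) (h : ∀ a ∈ s, ∃ b ∈ s, r b a) : s.Infinite := by
  intro hfin
  obtain ⟨a, ha⟩ := hs
  obtain ⟨⟨m, hm⟩, -, hmin⟩ := (hfin.wellFoundedOn (r := r)).has_min Set.univ ⟨⟨a, ha⟩, trivial⟩
  obtain ⟨b, hb, hbm⟩ := h m hm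
  exact hmin ⟨b, hb⟩ trivial hbm

section

variable {V : Type*} {A : V → V → Prop}

variable (A) in
def StrictReach (x y : V) : Prop := Reach A x y ∧ ¬ Reach A y x

instance : IsStrictOrder V (StrictReach A) where
  irrefl _ h := h.2 h.1
  trans _ _ _ hxy hyz := ⟨hxy.1.trans hyz.1, fun hzx => hxy.2 (hyz.1.trans hzx)⟩

theorem strictReach_of_reach_of_strictReach {x y z : V} (hxy : Reach A x y)
    (hyz : StrictReach A y z) : StrictReach A x z :=
  ⟨hxy.trans hyz.1, fun hzx => hyz.2 (hzx.trans hxy)⟩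

theorem SCC_subset_shadow {s u : V} (hs : s ∈ Shadow A u) : SCC A s ⊆ Shadow A u :=
  fun _ hw => hw.2.trans hs

theorem exists_strictReach_of_not_initialSCC {s : V} (h : ¬ InitialSCC A (SCC A s)) :
    ∃ x, StrictReach A x s := by
  obtain ⟨x, y, hxy, hy, hx⟩ : ∃ x y, A x y ∧ y ∈ SCC A s ∧ x ∉ SCC A s := by
    by_contra! hclosed
    exact h ⟨⟨s, rfl⟩, hclosed⟩
  have hxs : Reach A x s := (Relation.ReflTransGen.single hxy).trans hy.2
  exact ⟨x, hxs, fun hsx => hx ⟨hsx, hxs⟩⟩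

theorem PointReaching.exists_strictReach_mem {S : Set V} (hS : PointReaching A S) {u : V}
    (hu : ¬ ∃ C : Set V, InitialSCC A C ∧ C ⊆ Shadow A u) {s : V} (hs : s ∈ Shadow A u) :
    ∃ t ∈ S ∩ Shadow A u, StrictReach A t s := by
  obtain ⟨x, hxs⟩ := exists_strictReach_of_not_initialSCC fun h => hu ⟨_, h, SCC_subset_shadow hs⟩
  obtain ⟨t, htS, htx⟩ := hS x
  exact ⟨t, ⟨htS, htx.trans (hxs.1.trans hs)⟩, strictReach_of_reach_of_strictReach htx hxs⟩

end

theorem pointReaching_infinite_in_shadow {V : Type*} (A : V → V → Prop)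
    (S : Set V) (hS : PointReaching A S) (u : V)
    (hu : ¬ ∃ C : Set V, InitialSCC A C ∧ C ⊆ Shadow A u) :
    (S ∩ Shadow A u).Infinite := by
  obtain ⟨s, hsS, hsu⟩ := hS u
  exact Set.infinite_of_forall_exists_rel (r := StrictReach A) ⟨s, hsS, hsu⟩
    fun _ ht => hS.exists_strictReach_mem hu ht.2
end
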